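/- Let r ≥ 3 be an integer, let G be a finite triangle-free 4-sunspot-free graph, and let (L_0, …, L_r) be an r-leveling in G such that the subgraph induced on L_r is liberal. Let H be a hole of length at least 6 in the subgraph induced on L_r and let x1–h1–h2–x2–x1 be an H-flap in G where h1, h2 ∈ V(H) and x1, x2 ∈ L_{r−1} ∪ L_r. Then x1, x2 ∈ L_r \ V(H). -/

import Mathlib

open SimpleGraph

/-- A `4`-sunspot in `G`: seven pairwise distinct vertices whose induced edge set is exactly
`{x₁x₂, x₂x₃, x₃x₄, x₄x₁, x₁y₁, x₂y₂, x₃y₃}`. -/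
def IsFourSunspot {V : Type} (G : SimpleGraph V) (x₁ x₂ x₃ x₄ y₁ y₂ y₃ : V) : Prop :=
  [x₁, x₂, x₃, x₄, y₁, y₂, y₃].Nodup ∧
  G.Adj x₁ x₂ ∧ G.Adj x₂ x₃ ∧ G.Adj x₃ x₄ ∧ G.Adj x₄ x₁ ∧
  G.Adj x₁ y₁ ∧ G.Adj x₂ y₂ ∧ G.Adj x₃ y₃ ∧
  ¬ G.Adj x₁ x₃ ∧ ¬ G.Adj x₂ x₄ ∧
  ¬ G.Adj x₁ y₂ ∧ ¬ G.Adj x₁ y₃ ∧ ¬ G.Adj x₂ y₁ ∧ ¬ G.Adj x₂ y₃ ∧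
  ¬ G.Adj x₃ y₁ ∧ ¬ G.Adj x₃ y₂ ∧ ¬ G.Adj x₄ y₁ ∧ ¬ G.Adj x₄ y₂ ∧ ¬ G.Adj x₄ y₃ ∧
  ¬ G.Adj y₁ y₂ ∧ ¬ G.Adj y₁ y₃ ∧ ¬ G.Adj y₂ y₃

/-- `G` is `4`-sunspot-free if there is no `4`-sunspot in `G`. -/
def FourSunspotFree {V : Type} (G : SimpleGraph V) : Prop :=
  ∀ x₁ x₂ x₃ x₄ y₁ y₂ y₃ : V, ¬ IsFourSunspot G x₁ x₂ x₃ x₄ y₁ y₂ y₃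

/-- The `t`-sun: a `t`-vertex cycle (on `Sum.inl` vertices) together with a pendant
(degree-one) neighbor `Sum.inr i` for each cycle vertex `Sum.inl i`. -/
def Sun (t : ℕ) : SimpleGraph (ZMod t ⊕ ZMod t) :=
  SimpleGraph.fromEdgeSet
    ((Set.range fun i : ZMod t => s(Sum.inl i, Sum.inl (i + 1))) ∪
     (Set.range fun i : ZMod t => s(Sum.inl i, Sum.inr i)))

/-- `G` is `t`-sun-free: no induced subgraph of `G` is a `t`-sun. -/
def SunFree (t : ℕ) {V : Type} (G : SimpleGraph V) : Prop :=
  IsEmpty (Sun t ↪g G)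

/-- The bull: a triangle `0,1,2` with pendant vertices `3` (adjacent to `0`)
and `4` (adjacent to `1`). -/
def Bull : SimpleGraph (Fin 5) :=
  SimpleGraph.fromEdgeSet {s(0, 1), s(1, 2), s(0, 2), s(0, 3), s(1, 4)}

/-- `G` is bull-free: no induced subgraph of `G` is a bull. -/
def BullFree {V : Type} (G : SimpleGraph V) : Prop :=
  IsEmpty (Bull ↪g G)

/-- A hole in `G`: an induced cycle on at least `4` vertices, given as a graph embedding
of the cycle graph. -/
structure Hole {V : Type} (G : SimpleGraph V) where
  len : ℕ
  four_le : 4 ≤ len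
  emb : SimpleGraph.cycleGraph len ↪g G

/-- The vertex set of a hole. -/
def Hole.verts {V : Type} {G : SimpleGraph V} (H : Hole G) : Set V :=
  Set.range H.emb

/-- The edge set of a hole. -/
def Hole.edges {V : Type} {G : SimpleGraph V} (H : Hole G) : Set (Sym2 V) :=
  {e | ∃ i j : Fin H.len, (SimpleGraph.cycleGraph H.len).Adj i j ∧ e = s(H.emb i, H.emb j)}

/-- `G` is liberal: for distinct non-adjacent `x, y`, neither dominates the other. -/
def Liberal {V : Type} (G : SimpleGraph V) : Prop :=
  ∀ x y : V, x ≠ y → ¬ G.Adj x y →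
    (G.neighborSet x \ G.neighborSet y).Nonempty ∧
    (G.neighborSet y \ G.neighborSet x).Nonempty

/-- `G` is non-degenerate: every vertex has degree at least `χ(G) - 1`. -/
def NonDegenerate {V : Type} (G : SimpleGraph V) : Prop :=
  ∀ v : V, G.chromaticNumber ≤ ((G.neighborSet v).ncard : ℕ∞) + 1

/-- `G` is flapless: for every hole `H` of length at least `6` in `G`, there is no `H`-flap,
i.e. no `4`-hole sharing an edge with `H`. -/
def Flapless {V : Type} (G : SimpleGraph V) : Prop :=
  ∀ H : Hole G, 6 ≤ H.len → ∀ F : Hole G, F.len = 4 → ∀ e ∈ F.edges, e ∉ H.edges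

/-- An `r`-leveling in `G`: pairwise disjoint nonempty sets `L 0, …, L r` such that every
vertex of `L i` (`i ≥ 1`) has a neighbor in `L (i-1)`, and edges only join consecutive levels. -/
def IsLeveling {V : Type} (G : SimpleGraph V) (r : ℕ) (L : ℕ → Set V) : Prop :=
  (∀ i, i ≤ r → (L i).Nonempty) ∧
  (∀ i j, i ≤ r → j ≤ r → i ≠ j → Disjoint (L i) (L j)) ∧
  (∀ i, 1 ≤ i → i ≤ r → ∀ v ∈ L i, ∃ u ∈ L (i - 1), G.Adj u v) ∧
  (∀ i j, i ≤ r → j ≤ r → i ≠ j →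
    ∀ u ∈ L i, ∀ v ∈ L j, G.Adj u v → i = j + 1 ∨ j = i + 1)

/-- `x` has no sector of length at most `2` in the hole `H`: there is no edge of `H` with both
ends adjacent to `x`, and no path of length `2` in `H` whose ends are adjacent to `x` and whose
middle vertex is not. -/
def NoSectorLenLe2 {V : Type} (G : SimpleGraph V) (H : Hole G) (x : V) : Prop :=
  (∀ i j : Fin H.len, (SimpleGraph.cycleGraph H.len).Adj i j →
      ¬ (G.Adj x (H.emb i) ∧ G.Adj x (H.emb j))) ∧
  (∀ i j k : Fin H.len, (SimpleGraph.cycleGraph H.len).Adj i j →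
      (SimpleGraph.cycleGraph H.len).Adj j k → i ≠ k →
      ¬ (G.Adj x (H.emb i) ∧ ¬ G.Adj x (H.emb j) ∧ G.Adj x (H.emb k)))

/-- `X` and `Y` are anticomplete in `G`: disjoint, with no edge between them. -/
def Anticomplete {V : Type} (G : SimpleGraph V) (X Y : Set V) : Prop :=
  Disjoint X Y ∧ ∀ x ∈ X, ∀ y ∈ Y, ¬ G.Adj x y

/-- An `H`-flare in `G`: to each vertex `H.emb i` of the hole `H`, assign a set `Φ i` of at
most one vertex, contained in the neighborhood of `H.emb i` and disjoint from `H`. -/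
structure IsFlare {V : Type} (G : SimpleGraph V) (H : Hole G) (Φ : Fin H.len → Set V) : Prop where
  subset_nbhd : ∀ i, Φ i ⊆ G.neighborSet (H.emb i) \ H.verts
  subsingleton : ∀ i, (Φ i).Subsingleton

/-- A flare is full if `|Φ i| = 1` for every `i`. -/
def IsFullFlare {V : Type} (G : SimpleGraph V) (H : Hole G) (Φ : Fin H.len → Set V) : Prop :=
  IsFlare G H Φ ∧ ∀ i, (Φ i).Nonempty

/-- A flare `Φ` is `d`-safe: for distinct hole vertices at distance at most `d` in `H`,
`Φ(h)` and `Φ[h'] = Φ(h') ∪ {h'}` are anticomplete in `G`. -/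
def DSafe {V : Type} (G : SimpleGraph V) (H : Hole G) (Φ : Fin H.len → Set V) (d : ℕ) : Prop :=
  ∀ i j : Fin H.len, i ≠ j → (SimpleGraph.cycleGraph H.len).dist i j ≤ d →
    Anticomplete G (Φ i) (Φ j ∪ {H.emb j})

/-!
Follow the hole `H` as a two-way infinite walk `a : ℤ → V` with `h₁ = a 0`, `h₂ = a 1`. The heart
of the argument is that no vertex `v ∈ L (r-1) ∪ L r` other than `a k` is adjacent to both
`a (k-1)` and `a (k+1)`. For `v ∈ L (r-1)`, a neighbour of `v` in `L (r-2)` is a pendant that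
completes a 4-sunspot around the square `a (k-1), v, a (k+1), a k`. For `v ∈ L r`, pick a
neighbour `t ∈ L (r-1)` of `a k`; by the first case `t` misses `a (k±2)`, and either `t ≁ v`
gives a sunspot around the square `a (k-1), a k, a (k+1), v`, or `t ∼ v` and liberality of
`L r` supplies private neighbours of `v` and `a k` that, together with a neighbour of `t` in
`L (r-2)`, again complete a sunspot. Applied to the flap, this keeps `x₁, x₂` off the hole, and
a neighbour in `L (r-2)` of an `xᵢ ∈ L (r-1)` would complete a sunspot around the flap itself.
-/

section

variable {V : Type} {G : SimpleGraph V}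

lemma SimpleGraph.CliqueFree.not_adj_of_adj_of_adj (htri : G.CliqueFree 3) {a b c : V}
    (hab : G.Adj a b) (hbc : G.Adj b c) : ¬ G.Adj a c := by
  classical
  exact fun hac => htri {a, b, c} (is3Clique_triple_iff.2 ⟨hab, hac, hbc⟩)

/-- In a triangle-free graph the other non-edges of a 4-sunspot, and the distinctness of its
vertices, are forced. -/
lemma IsFourSunspot.of_cliqueFree_three (htri : G.CliqueFree 3) {x₁ x₂ x₃ x₄ y₁ y₂ y₃ : V}
    (h₁₂ : G.Adj x₁ x₂) (h₂₃ : G.Adj x₂ x₃) (h₃₄ : G.Adj x₃ x₄) (h₄₁ : G.Adj x₄ x₁)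
    (h₁ : G.Adj x₁ y₁) (h₂ : G.Adj x₂ y₂) (h₃ : G.Adj x₃ y₃)
    (n₁₃ : ¬ G.Adj x₁ y₃) (n₃₁ : ¬ G.Adj x₃ y₁) (n₄₂ : ¬ G.Adj x₄ y₂)
    (m₁₂ : ¬ G.Adj y₁ y₂) (m₁₃ : ¬ G.Adj y₁ y₃) (m₂₃ : ¬ G.Adj y₂ y₃) :
    IsFourSunspot G x₁ x₂ x₃ x₄ y₁ y₂ y₃ := by
  have d₁₃ : ¬ G.Adj x₁ x₃ := htri.not_adj_of_adj_of_adj h₁₂ h₂₃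
  have d₂₄ : ¬ G.Adj x₂ x₄ := htri.not_adj_of_adj_of_adj h₂₃ h₃₄
  have n₁₂ : ¬ G.Adj x₁ y₂ := htri.not_adj_of_adj_of_adj h₁₂ h₂
  have n₂₁ : ¬ G.Adj x₂ y₁ := htri.not_adj_of_adj_of_adj h₁₂.symm h₁
  have n₂₃ : ¬ G.Adj x₂ y₃ := htri.not_adj_of_adj_of_adj h₂₃ h₃
  have n₃₂ : ¬ G.Adj x₃ y₂ := htri.not_adj_of_adj_of_adj h₂₃.symm h₂
  have n₄₁ : ¬ G.Adj x₄ y₁ := htri.not_adj_of_adj_of_adj h₄₁ h₁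
  have n₄₃ : ¬ G.Adj x₄ y₃ := htri.not_adj_of_adj_of_adj h₃₄.symm h₃
  refine ⟨?_, h₁₂, h₂₃, h₃₄, h₄₁, h₁, h₂, h₃, d₁₃, d₂₄, n₁₂, n₁₃, n₂₁, n₂₃, n₃₁, n₃₂, n₄₁, n₄₂,
    n₄₃, m₁₂, m₁₃, m₂₃⟩
  simp only [List.nodup_cons, List.mem_cons, List.not_mem_nil, List.nodup_nil, or_false, not_or,
    not_false_eq_true, and_true]
  refine ⟨⟨?_, ?_, ?_, ?_, ?_, ?_⟩, ⟨?_, ?_, ?_, ?_, ?_⟩, ⟨?_, ?_, ?_, ?_⟩, ⟨?_, ?_, ?_⟩,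
    ⟨?_, ?_⟩, ?_⟩ <;> rintro rfl <;> simp_all [adj_comm]

lemma IsLeveling.exists_adj_forall_not_adj {r : ℕ} {L : ℕ → Set V} (hL : IsLeveling G r L)
    (hr : 2 ≤ r) {x : V} (hx : x ∈ L (r - 1)) : ∃ y, G.Adj x y ∧ ∀ w ∈ L r, ¬ G.Adj w y := by
  obtain ⟨y, hy, hyx⟩ := hL.2.2.1 (r - 1) (by omega) (by omega) x hx
  refine ⟨y, hyx.symm, fun w hw hwy => ?_⟩
  have := hL.2.2.2 r (r - 1 - 1) le_rfl (by omega) (by omega) w hw y hy hwy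
  omega

lemma Liberal.exists_adj_not_adj_of_induce {S : Set V} (hlib : Liberal (G.induce S)) {x y : V}
    (hx : x ∈ S) (hy : y ∈ S) (hne : x ≠ y) (hxy : ¬ G.Adj x y) :
    ∃ z ∈ S, G.Adj x z ∧ ¬ G.Adj y z := by
  obtain ⟨⟨z, hz⟩, hxz, hyz⟩ := (hlib ⟨x, hx⟩ ⟨y, hy⟩ (by simpa using hne) hxy).1
  exact ⟨z, hz, hxz, hyz⟩

/-- A two-way infinite walk around a hole of length at least `6` with vertex set `S`. -/
structure IsHoleWalk (G : SimpleGraph V) (S : Set V) (a : ℤ → V) : Prop where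
  mem : ∀ k, a k ∈ S
  adj_iff : ∀ j k, (j - k).natAbs ≤ 4 → (G.Adj (a j) (a k) ↔ (j - k).natAbs = 1)
  eq_of_adj : ∀ x ∈ S, ∀ k, G.Adj x (a k) → x = a (k - 1) ∨ x = a (k + 1)

namespace IsHoleWalk

variable {S : Set V} {a : ℤ → V}

lemma adj (hw : IsHoleWalk G S a) {j k : ℤ} (h : (j - k).natAbs = 1) : G.Adj (a j) (a k) :=
  (hw.adj_iff j k (by omega)).2 h

lemma not_adj (hw : IsHoleWalk G S a) {j k : ℤ} (h₂ : 2 ≤ (j - k).natAbs)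
    (h₄ : (j - k).natAbs ≤ 4) : ¬ G.Adj (a j) (a k) := fun h => by
  have := (hw.adj_iff j k h₄).1 h
  omega

lemma reflect (hw : IsHoleWalk G S a) (c : ℤ) : IsHoleWalk G S (fun k => a (c - k)) where
  mem k := hw.mem (c - k)
  adj_iff j k h := by
    have hd : (c - j - (c - k)).natAbs = (j - k).natAbs := by omega
    exact hd ▸ hw.adj_iff (c - j) (c - k) (hd ▸ h)
  eq_of_adj x hx k h := by
    have := hw.eq_of_adj x hx (c - k) h
    rwa [sub_sub, sub_add_eq_add_sub, ← sub_sub_eq_add_sub, or_comm] at this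

end IsHoleWalk

section CycleGraph

open Fin.CommRing

lemma cycleGraph_adj_add_intCast {m : ℕ} (i : Fin (m + 2)) (j k : ℤ) :
    (cycleGraph (m + 2)).Adj (i + j) (i + k) ↔
      ((m + 2 : ℕ) : ℤ) ∣ j - k - 1 ∨ ((m + 2 : ℕ) : ℤ) ∣ k - j - 1 := by
  rw [cycleGraph_adj, add_sub_add_left_eq_sub, add_sub_add_left_eq_sub,
    ← CharP.intCast_eq_zero_iff (Fin (m + 2)), ← CharP.intCast_eq_zero_iff (Fin (m + 2))]
  push_cast
  rw [sub_eq_zero, sub_eq_zero]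

lemma isHoleWalk_cycleGraph_embedding {m : ℕ} (hm : 4 ≤ m) (e : cycleGraph (m + 2) ↪g G)
    (i : Fin (m + 2)) : IsHoleWalk G (Set.range e) (fun k : ℤ => e (i + k)) where
  mem k := ⟨_, rfl⟩
  adj_iff j k h := by
    rw [e.map_adj_iff, cycleGraph_adj_add_intCast]
    constructor
    · rintro (hd | hd) <;> have := Int.eq_zero_of_abs_lt_dvd hd (by rw [abs_lt]; omega) <;> omega
    · intro hd
      rcases Int.natAbs_eq_iff.1 hd with hd | hd
      · exact Or.inl ⟨0, by push_cast at hd; omega⟩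
      · exact Or.inr ⟨0, by push_cast at hd; omega⟩
  eq_of_adj := by
    rintro _ ⟨y, rfl⟩ k h
    rw [e.map_adj_iff, cycleGraph_adj] at h
    push_cast
    rcases h with h | h
    · exact Or.inr (congrArg e (by linear_combination h))
    · exact Or.inl (congrArg e (by linear_combination -h))

lemma exists_isHoleWalk_of_adj {n : ℕ} (hn : 6 ≤ n) (e : cycleGraph n ↪g G) {i j : Fin n}
    (hij : (cycleGraph n).Adj i j) : ∃ a, IsHoleWalk G (Set.range e) a ∧ a 0 = e i ∧ a 1 = e j := by
  obtain ⟨m, rfl⟩ : ∃ m, n = m + 2 := ⟨n - 2, by omega⟩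
  rcases cycleGraph_adj.1 hij with h | h
  · exact ⟨_, (isHoleWalk_cycleGraph_embedding (by omega) e j).reflect 1, by simp [← h], by simp⟩
  · exact ⟨_, isHoleWalk_cycleGraph_embedding (by omega) e i, by simp, by simp [← h]⟩

end CycleGraph

lemma Hole.exists_isHoleWalk (H : Hole G) (hH : 6 ≤ H.len) {h₁ h₂ : V}
    (he : s(h₁, h₂) ∈ H.edges) : ∃ a, IsHoleWalk G H.verts a ∧ a 0 = h₁ ∧ a 1 = h₂ := by
  obtain ⟨i, j, hij, he⟩ := he
  rcases Sym2.eq_iff.1 he with ⟨rfl, rfl⟩ | ⟨rfl, rfl⟩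
  · exact exists_isHoleWalk_of_adj hH H.emb hij
  · exact exists_isHoleWalk_of_adj hH H.emb hij.symm

namespace IsHoleWalk

variable {r : ℕ} {L : ℕ → Set V} {S : Set V} {a : ℤ → V}

lemma not_adj_adj_of_mem_sub_one (htri : G.CliqueFree 3) (hspot : FourSunspotFree G)
    (hL : IsLeveling G r L) (hr : 2 ≤ r) (hw : IsHoleWalk G S a) (hS : S ⊆ L r) {v : V}
    (hv : v ∈ L (r - 1)) (k : ℤ) : ¬ (G.Adj v (a (k - 1)) ∧ G.Adj v (a (k + 1))) := by
  rintro ⟨hvl, hvr⟩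
  obtain ⟨y, hvy, hy⟩ := hL.exists_adj_forall_not_adj hr hv
  have hay : ∀ j, ¬ G.Adj (a j) y := fun j => hy _ (hS (hw.mem j))
  exact hspot (a (k - 1)) v (a (k + 1)) (a k) (a (k - 2)) y (a (k + 2)) <|
    .of_cliqueFree_three htri hvl.symm hvr (hw.adj (by omega)) (hw.adj (by omega))
      (hw.adj (by omega)) hvy (hw.adj (by omega)) (hw.not_adj (by omega) (by omega))
      (hw.not_adj (by omega) (by omega)) (hay k) (hay (k - 2))
      (hw.not_adj (by omega) (by omega)) (fun h => hay (k + 2) h.symm)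

lemma not_adj_adj_of_mem_top (htri : G.CliqueFree 3) (hspot : FourSunspotFree G)
    (hL : IsLeveling G r L) (hr : 2 ≤ r) (hlib : Liberal (G.induce (L r)))
    (hw : IsHoleWalk G S a) (hS : S ⊆ L r) {v : V} (hv : v ∈ L r) (k : ℤ) (hvk : v ≠ a k) :
    ¬ (G.Adj v (a (k - 1)) ∧ G.Adj v (a (k + 1))) := by
  rintro ⟨hvl, hvr⟩
  have ha : ∀ j, a j ∈ L r := fun j => hS (hw.mem j)
  have hvk' : ¬ G.Adj v (a k) := fun h => htri.not_adj_of_adj_of_adj h (hw.adj (by omega)) hvr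
  obtain ⟨t, ht, htk⟩ := hL.2.2.1 r (by omega) le_rfl (a k) (ha k)
  have hA := hw.not_adj_adj_of_mem_sub_one htri hspot hL hr hS ht
  have htl : ¬ G.Adj t (a (k - 2)) := fun h =>
    hA (k - 1) ⟨by rwa [sub_sub, one_add_one_eq_two], by rwa [sub_add_cancel]⟩
  have htr : ¬ G.Adj t (a (k + 2)) := fun h =>
    hA (k + 1) ⟨by rwa [add_sub_cancel_right], by rwa [add_assoc, one_add_one_eq_two]⟩
  by_cases htv : G.Adj t v
  swap
  · exact hspot (a (k - 1)) (a k) (a (k + 1)) v (a (k - 2)) t (a (k + 2)) <|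
      .of_cliqueFree_three htri (hw.adj (by omega)) (hw.adj (by omega)) hvr.symm hvl
        (hw.adj (by omega)) htk.symm (hw.adj (by omega)) (hw.not_adj (by omega) (by omega))
        (hw.not_adj (by omega) (by omega)) (fun h => htv h.symm) (fun h => htl h.symm)
        (hw.not_adj (by omega) (by omega)) htr
  obtain ⟨s, hts, hs⟩ := hL.exists_adj_forall_not_adj hr ht
  obtain ⟨z, hz, hvz, hkz⟩ := hlib.exists_adj_not_adj_of_induce hv (ha k) hvk hvk'
  obtain ⟨u, hu, hku, hvu⟩ :=
    hlib.exists_adj_not_adj_of_induce (ha k) hv hvk.symm (fun h => hvk' h.symm)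
  by_cases hzr : G.Adj (a (k + 2)) z
  · by_cases hur : G.Adj (a (k + 2)) u
    · exact hspot (a k) t v (a (k + 1)) u s z <|
        .of_cliqueFree_three htri htk.symm htv hvr (hw.adj (by omega)) hku hts hvz hkz hvu
          (hs _ (ha _)) (hs u hu) (htri.not_adj_of_adj_of_adj hur.symm hzr)
          (fun h => hs z hz h.symm)
    · exact hspot (a (k + 1)) (a k) t v (a (k + 2)) u s <|
        .of_cliqueFree_three htri (hw.adj (by omega)) htk.symm htv hvr (hw.adj (by omega)) hku
          hts (hs _ (ha _)) htr hvu hur (hs _ (ha _)) (hs u hu)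
  · exact hspot (a (k + 1)) v t (a k) (a (k + 2)) z s <|
      .of_cliqueFree_three htri hvr.symm htv.symm htk (hw.adj (by omega)) (hw.adj (by omega))
        hvz hts (hs _ (ha _)) htr hkz hzr (hs _ (ha _)) (hs z hz)

lemma not_adj_adj (htri : G.CliqueFree 3) (hspot : FourSunspotFree G)
    (hL : IsLeveling G r L) (hr : 2 ≤ r) (hlib : Liberal (G.induce (L r)))
    (hw : IsHoleWalk G S a) (hS : S ⊆ L r) {v : V} (hv : v ∈ L (r - 1) ∪ L r) (k : ℤ)
    (hvk : v ≠ a k) : ¬ (G.Adj v (a (k - 1)) ∧ G.Adj v (a (k + 1))) :=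
  hv.elim (fun hv => hw.not_adj_adj_of_mem_sub_one htri hspot hL hr hS hv k)
    (fun hv => hw.not_adj_adj_of_mem_top htri hspot hL hr hlib hS hv k hvk)

lemma mem_diff_of_flap (htri : G.CliqueFree 3) (hspot : FourSunspotFree G)
    (hL : IsLeveling G r L) (hr : 2 ≤ r) (hlib : Liberal (G.induce (L r)))
    (hw : IsHoleWalk G S a) (hS : S ⊆ L r) {x₁ x₂ : V}
    (ha1 : G.Adj x₁ (a 0)) (ha2 : G.Adj (a 1) x₂) (ha3 : G.Adj x₂ x₁)
    (hne1 : x₁ ≠ a 1) (hne2 : x₂ ≠ a 0)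
    (hx₁ : x₁ ∈ L (r - 1) ∪ L r) (hx₂ : x₂ ∈ L (r - 1) ∪ L r) : x₁ ∈ L r \ S := by
  have hx₂l : ¬ G.Adj x₂ (a (-1)) := fun h =>
    hw.not_adj_adj htri hspot hL hr hlib hS hx₂ 0 hne2 ⟨by simpa using h, by simpa using ha2.symm⟩
  have hx₁r : ¬ G.Adj x₁ (a 2) := fun h =>
    hw.not_adj_adj htri hspot hL hr hlib hS hx₁ 1 hne1 ⟨by simpa using ha1, by simpa using h⟩
  refine ⟨hx₁.resolve_left fun hx₁ => ?_, fun hx₁S => ?_⟩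
  · obtain ⟨y, hx₁y, hy⟩ := hL.exists_adj_forall_not_adj hr hx₁
    have hay : ∀ j, ¬ G.Adj (a j) y := fun j => hy _ (hS (hw.mem j))
    exact hspot (a 1) (a 0) x₁ x₂ (a 2) (a (-1)) y <|
      .of_cliqueFree_three htri (hw.adj (by omega)) ha1.symm ha3.symm ha2.symm
        (hw.adj (by omega)) (hw.adj (by omega)) hx₁y (hay 1) hx₁r hx₂l
        (hw.not_adj (by omega) (by omega)) (hay 2) (hay (-1))
  · rcases hw.eq_of_adj x₁ hx₁S 0 ha1 with h | h
    · exact hx₂l (by simpa [h] using ha3)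
    · exact hne1 (by simpa using h)

end IsHoleWalk

end

theorem stmt_10_general {V : Type} (r : ℕ) (hr : 3 ≤ r) (G : SimpleGraph V)
    (htri : G.CliqueFree 3)
    (hspot : FourSunspotFree G)
    (L : ℕ → Set V) (hL : IsLeveling G r L)
    (hlib : Liberal (G.induce (L r)))
    (H : Hole G) (hHsub : H.verts ⊆ L r) (hHlen : 6 ≤ H.len)
    (x₁ x₂ h₁ h₂ : V)
    (hedge : s(h₁, h₂) ∈ H.edges)
    (ha1 : G.Adj x₁ h₁) (ha2 : G.Adj h₂ x₂) (ha3 : G.Adj x₂ x₁)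
    (hne1 : x₁ ≠ h₂) (hne2 : x₂ ≠ h₁)
    (hx₁ : x₁ ∈ L (r - 1) ∪ L r) (hx₂ : x₂ ∈ L (r - 1) ∪ L r) :
    x₁ ∈ L r \ H.verts ∧ x₂ ∈ L r \ H.verts := by
  obtain ⟨a, hw, rfl, rfl⟩ := H.exists_isHoleWalk hHlen hedge
  have hr₂ : 2 ≤ r := by omega
  refine ⟨hw.mem_diff_of_flap htri hspot hL hr₂ hlib hHsub ha1 ha2 ha3 hne1 hne2 hx₁ hx₂, ?_⟩
  exact (hw.reflect 1).mem_diff_of_flap htri hspot hL hr₂ hlib hHsub (by simpa using ha2.symm)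
    (by simpa using ha1.symm) ha3.symm (by simpa using hne2) (by simpa using hne1) hx₂ hx₁

/-- Let `r ≥ 3`, let `G` be finite, triangle-free and `4`-sunspot-free, let
`(L 0, …, L r)` be an `r`-leveling in `G` such that the subgraph induced on `L r` is liberal,
let `H` be a hole of length at least `6` in the subgraph induced on `L r`, and let
`x₁ - h₁ - h₂ - x₂ - x₁` be an `H`-flap in `G` (a `4`-hole sharing the edge `h₁h₂` with `H`)
with `h₁, h₂ ∈ V(H)` and `x₁, x₂ ∈ L (r-1) ∪ L r`. Then `x₁, x₂ ∈ L r \ V(H)`. -/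
theorem stmt_10 {V : Type} [Fintype V] (r : ℕ) (hr : 3 ≤ r) (G : SimpleGraph V)
    (htri : G.CliqueFree 3)
    (hspot : FourSunspotFree G)
    (L : ℕ → Set V) (hL : IsLeveling G r L)
    (hlib : Liberal (G.induce (L r)))
    (H : Hole G) (hHsub : H.verts ⊆ L r) (hHlen : 6 ≤ H.len)
    (x₁ x₂ h₁ h₂ : V)
    (hedge : s(h₁, h₂) ∈ H.edges)
    (ha1 : G.Adj x₁ h₁) (ha2 : G.Adj h₂ x₂) (ha3 : G.Adj x₂ x₁)
    (hn1 : ¬ G.Adj x₁ h₂) (hn2 : ¬ G.Adj h₁ x₂) (hne1 : x₁ ≠ h₂) (hne2 : x₂ ≠ h₁)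
    (hx₁ : x₁ ∈ L (r - 1) ∪ L r) (hx₂ : x₂ ∈ L (r - 1) ∪ L r) :
    x₁ ∈ L r \ H.verts ∧ x₂ ∈ L r \ H.verts :=
  stmt_10_general r hr G htri hspot L hL hlib H hHsub hHlen x₁ x₂ h₁ h₂ hedge ha1 ha2 ha3 hne1 hne2
    hx₁ hx₂
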